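/- arXiv:1303.2866 — 3 statements merged into one kernel-verified Lean document; each statement's English description precedes it below -/
import Mathlib

section
/- Let λ ∈ ℂ be nonzero, θ a unit complex number, and let (z(t), y(t)) be a differentiable path with y(t) ≠ 0 satisfying λ·y'(t) = y(t)·(1 + R(t))·z'(t) and z'(t) = -θ·λ/|λ| for a continuous function R: I → ℂ. Then d/dt log|y(t)| = Re(-θ·(1 + R(t)))/|λ|. In particular, if |R(t)| ≤ M < 1 and |arg θ| < arccos M for all t, then t ↦ |y(t)| is strictly decreasing. -/
open Complex

/-! Substituting `z' = -θ λ / |λ|` into `λ y' = y (1 + R) z'` gives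
`y'/y = -θ (1 + R) / |λ|`, and `(log |y|)' = Re (y'/y)`. As `Re θ = cos (arg θ) > M` and
`|Re (θ R)| ≤ |R| ≤ M`, the real part `Re (θ (1 + R))` is positive, so `log |y|` decreases. -/

theorem HasDerivAt.log_norm {f : ℝ → ℂ} {f' : ℂ} {t : ℝ} (hf : HasDerivAt f f' t)
    (hft : f t ≠ 0) : HasDerivAt (fun s => Real.log ‖f s‖) (f' / f t).re t := by
  have hsq : (fun s => Real.log ‖f s‖) = fun s => Real.log (‖f s‖ ^ 2) / 2 := by
    funext s
    rw [Real.log_pow]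
    ring
  have hpos : ‖f t‖ ^ 2 ≠ 0 := by positivity
  rw [hsq]
  refine ((hf.norm_sq.log hpos).div_const 2).congr_deriv ?_
  rw [Complex.inner, div_re, ← normSq_eq_norm_sq]
  field_simp
  simp only [mul_re, conj_re, conj_im]
  ring

theorem Real.lt_cos_of_abs_lt_arccos {x M : ℝ} (h : |x| < Real.arccos M) : M < Real.cos x := by
  have hM : M < 1 := Real.arccos_pos.mp ((abs_nonneg x).trans_lt h)
  have hcos : Real.cos (Real.arccos M) < Real.cos |x| :=
    Real.strictAntiOn_cos ⟨abs_nonneg x, h.le.trans (Real.arccos_le_pi M)⟩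
      ⟨Real.arccos_nonneg M, Real.arccos_le_pi M⟩ h
  rw [Real.cos_abs] at hcos
  rcases le_or_gt (-1) M with hM₁ | hM₁
  · rwa [Real.cos_arccos hM₁ hM.le] at hcos
  · rw [Real.arccos_of_le_neg_one hM₁.le, Real.cos_pi] at hcos
    linarith

theorem Complex.mul_norm_lt_re_of_abs_arg_lt_arccos {θ : ℂ} {M : ℝ} (hθ : θ ≠ 0)
    (h : |θ.arg| < Real.arccos M) : M * ‖θ‖ < θ.re := by
  rw [← norm_mul_cos_arg, mul_comm]
  exact mul_lt_mul_of_pos_left (Real.lt_cos_of_abs_lt_arccos h) (norm_pos_iff.mpr hθ)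

theorem Complex.re_mul_one_add_pos {θ r : ℂ} {M : ℝ} (hθ : θ ≠ 0) (hr : ‖r‖ ≤ M)
    (h : |θ.arg| < Real.arccos M) : 0 < (θ * (1 + r)).re := by
  have hθr : -(‖θ‖ * M) ≤ (θ * r).re :=
    calc -(‖θ‖ * M) ≤ -‖θ * r‖ := by
          rw [norm_mul]; exact neg_le_neg (by gcongr)
      _ ≤ (θ * r).re := neg_le_of_neg_le (by simpa using re_le_norm (-(θ * r)))
  rw [mul_one_add, add_re]
  linarith [mul_norm_lt_re_of_abs_arg_lt_arccos hθ h]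

theorem stability_beam_nondegenerate_general
    (l : ℂ) (hl : l ≠ 0) (θ : ℂ) (hθ : ‖θ‖ = 1)
    (y : ℝ → ℂ) (y' : ℝ → ℂ) (R : ℝ → ℂ)
    (hy0 : ∀ t, y t ≠ 0)
    (hy : ∀ t : ℝ, HasDerivAt y (y' t) t)
    (hrel : ∀ t : ℝ, l * y' t = y t * (1 + R t) * (-θ * l / (‖l‖ : ℂ))) :
    (∀ t : ℝ, HasDerivAt (fun s => Real.log (‖y s‖))
        ((-θ * (1 + R t)).re / ‖l‖) t) ∧
    (∀ M : ℝ, M < 1 → (∀ t, ‖R t‖ ≤ M) →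
      |θ.arg| < Real.arccos M →
      StrictAnti (fun t => ‖y t‖)) := by
  have hlogderiv (t : ℝ) : y' t / y t = -θ * (1 + R t) / (‖l‖ : ℂ) := by
    rw [div_eq_iff (hy0 t)]
    apply mul_left_cancel₀ hl
    rw [hrel t]
    ring
  have hderiv (t : ℝ) : HasDerivAt (fun s => Real.log ‖y s‖) ((-θ * (1 + R t)).re / ‖l‖) t := by
    simpa only [hlogderiv, div_ofReal_re] using (hy t).log_norm (hy0 t)
  refine ⟨hderiv, fun M _ hRM harg => ?_⟩
  have hθ0 : θ ≠ 0 := norm_ne_zero_iff.mp (hθ ▸ one_ne_zero)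
  have hlog_anti : StrictAnti (fun s => Real.log ‖y s‖) := by
    refine strictAnti_of_deriv_neg fun t => ?_
    rw [(hderiv t).deriv, neg_mul, neg_re]
    exact div_neg_of_neg_of_pos (neg_neg_of_pos (re_mul_one_add_pos hθ0 (hRM t) harg))
      (norm_pos_iff.mpr hl)
  have hexp_log : (fun t => ‖y t‖) = fun t => Real.exp (Real.log ‖y t‖) := by
    funext t
    rw [Real.exp_log (norm_pos_iff.mpr (hy0 t))]
  rw [hexp_log]
  exact Real.exp_strictMono.comp_strictAnti hlog_anti

/-- Monotonicity along a ray of a stability beam for a nondegenerate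
singularity: if `λ y' = y (1 + R) z'` with `z' = -θ λ / |λ|`, then
`(log |y|)' = Re (-θ (1 + R)) / |λ|`; if moreover `|R| ≤ M < 1` and
`|arg θ| < arccos M`, then `|y|` is strictly decreasing. -/
theorem stability_beam_nondegenerate
    (l : ℂ) (hl : l ≠ 0) (θ : ℂ) (hθ : ‖θ‖ = 1)
    (z y : ℝ → ℂ) (y' : ℝ → ℂ) (R : ℝ → ℂ) (hR : Continuous R)
    (hy0 : ∀ t, y t ≠ 0)
    (hz : ∀ t : ℝ, HasDerivAt z (-θ * l / (‖l‖ : ℂ)) t)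
    (hy : ∀ t : ℝ, HasDerivAt y (y' t) t)
    (hrel : ∀ t : ℝ, l * y' t = y t * (1 + R t) * (-θ * l / (‖l‖ : ℂ))) :
    (∀ t : ℝ, HasDerivAt (fun s => Real.log (‖y s‖))
        ((-θ * (1 + R t)).re / ‖l‖) t) ∧
    (∀ M : ℝ, M < 1 → (∀ t, ‖R t‖ ≤ M) →
      |θ.arg| < Real.arccos M →
      StrictAnti (fun t => ‖y t‖)) :=
  stability_beam_nondegenerate_general l hl θ hθ y y' R hy0 hy hrel
end

section
/- For every c ∈ (0,1), the path Γ_c: [-π, π] → ℂ², Γ_c(t) = (c·e^{it}, exp(-(1/c)·(1 + e^{-it}))), is tangent to the foliation defined by ω₀ = x² dy - y dx; that is, writing Γ_c(t) = (x(t), y(t)), one has x(t)²·y'(t) = y(t)·x'(t) for all t. Moreover both endpoints Γ_c(-π) and Γ_c(π) equal (-c, 1), and |y(t)| = exp(-(1/c)(1 + cos t)) ≤ 1 for all t. -/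
open Complex

/-
Along `Γ_c` one has `x'(t) = i x(t)` and `y'(t) = (i/c) e^{-it} y(t)`, so `x² y' = i c e^{it} y = y x'`
because `e^{it} e^{-it} = 1`. The endpoint values come from `e^{±iπ} = -1`, which makes the
exponent of `y` vanish, and `|y(t)| = exp (-(1/c) Re (1 + e^{-it}))` is at most `1` since
`1 + cos t ≥ 0`.
-/

lemma cexp_I_mul_ofReal (t : ℝ) : exp (I * t) = Real.cos t + Real.sin t * I := by
  rw [mul_comm, exp_mul_I, ofReal_cos, ofReal_sin]

lemma cexp_neg_I_mul_ofReal (t : ℝ) : exp (-I * t) = Real.cos t - Real.sin t * I := by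
  rw [neg_mul, ← mul_neg, ← ofReal_neg, cexp_I_mul_ofReal, Real.cos_neg, Real.sin_neg,
    ofReal_neg, neg_mul, sub_eq_add_neg]

lemma hasDerivAt_cexp_mul_ofReal (b : ℂ) (t : ℝ) :
    HasDerivAt (fun s : ℝ => exp (b * s)) (b * exp (b * t)) t := by
  have h := ((hasDerivAt_id (t : ℂ)).const_mul b).cexp.comp_ofReal
  simpa [mul_comm] using h

lemma hasDerivAt_const_mul_cexp_I_mul_ofReal (c : ℂ) (t : ℝ) :
    HasDerivAt (fun s : ℝ => c * exp (I * s)) (c * I * exp (I * t)) t := by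
  simpa only [mul_assoc] using (hasDerivAt_cexp_mul_ofReal I t).const_mul c

lemma hasDerivAt_cexp_mul_one_add_cexp_neg_I_mul_ofReal (a : ℂ) (t : ℝ) :
    HasDerivAt (fun s : ℝ => exp (a * (1 + exp (-I * s))))
      (exp (a * (1 + exp (-I * t))) * (-a * I * exp (-I * t))) t := by
  have h := (((hasDerivAt_cexp_mul_ofReal (-I) t).const_add 1).const_mul a).cexp
  exact h.congr_deriv (by ring)

lemma sq_mul_deriv_eq_mul_deriv_of_saddle_node_path (c t : ℝ) :
    ((c : ℂ) * exp (I * t)) ^ 2 * deriv (fun s : ℝ => exp (-(1 / (c : ℂ)) * (1 + exp (-I * s)))) t =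
      exp (-(1 / (c : ℂ)) * (1 + exp (-I * t))) * deriv (fun s : ℝ => (c : ℂ) * exp (I * s)) t := by
  rw [(hasDerivAt_cexp_mul_one_add_cexp_neg_I_mul_ofReal _ t).deriv,
    (hasDerivAt_const_mul_cexp_I_mul_ofReal _ t).deriv]
  have hinv : exp (I * t) * exp (-I * t) = 1 := by rw [← exp_add, neg_mul, add_neg_cancel, exp_zero]
  have hc : (c : ℂ) ^ 2 * (1 / c) = c := by rw [one_div, sq, mul_self_mul_inv]
  linear_combination (exp (-(1 / (c : ℂ)) * (1 + exp (-I * t))) * I * exp (I * t)) *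
    ((c : ℂ) * hinv + exp (I * t) * exp (-I * t) * hc)

lemma norm_cexp_ofReal_mul_one_add_cexp_neg_I_mul (a t : ℝ) :
    ‖exp (a * (1 + exp (-I * t)))‖ = Real.exp (a * (1 + Real.cos t)) := by
  rw [norm_exp, cexp_neg_I_mul_ofReal]
  simp only [re_ofReal_mul, add_re, sub_re, one_re, ofReal_re, I_re, mul_zero, sub_zero]

lemma exp_neg_one_div_mul_one_add_cos_le_one {c : ℝ} (hc : 0 ≤ c) (t : ℝ) :
    Real.exp (-(1 / c) * (1 + Real.cos t)) ≤ 1 := by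
  have hcos : 0 ≤ 1 + Real.cos t := by linarith [Real.neg_one_le_cos t]
  exact Real.exp_le_one_iff.2 (mul_nonpos_of_nonpos_of_nonneg (by simpa using hc) hcos)

theorem inamovible_path_model_saddle_node_general (c : ℝ) (hc0 : 0 < c) :
    let x : ℝ → ℂ := fun t => (c : ℂ) * Complex.exp (Complex.I * (t : ℂ))
    let y : ℝ → ℂ := fun t =>
      Complex.exp (-(1 / (c : ℂ)) * (1 + Complex.exp (-Complex.I * (t : ℂ))))
    (∀ t ∈ Set.Icc (-Real.pi) Real.pi,
      (x t) ^ 2 * deriv y t = y t * deriv x t) ∧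
    (x (-Real.pi) = -(c : ℂ) ∧ y (-Real.pi) = 1 ∧
      x Real.pi = -(c : ℂ) ∧ y Real.pi = 1) ∧
    (∀ t ∈ Set.Icc (-Real.pi) Real.pi,
      ‖y t‖ = Real.exp (-(1 / c) * (1 + Real.cos t)) ∧
      ‖y t‖ ≤ 1) := by
  intro x y
  have hnorm (t : ℝ) : ‖y t‖ = Real.exp (-(1 / c) * (1 + Real.cos t)) := by
    have hcoef : -(1 / (c : ℂ)) = ((-(1 / c) : ℝ) : ℂ) := by push_cast; ring
    simp only [y, hcoef, norm_cexp_ofReal_mul_one_add_cexp_neg_I_mul]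
  refine ⟨fun t _ => sq_mul_deriv_eq_mul_deriv_of_saddle_node_path c t, ?_,
    fun t _ => ⟨hnorm t, (hnorm t).trans_le (exp_neg_one_div_mul_one_add_cos_le_one hc0.le t)⟩⟩
  simp only [x, y, cexp_I_mul_ofReal, cexp_neg_I_mul_ofReal]
  simp

/-- The paths `Γ_c(t) = (c e^{it}, exp (-(1/c)(1 + e^{-it})))`, `c ∈ (0,1)`,
are tangent to the model saddle–node foliation `x² dy = y dx`, have both
endpoints at `(-c, 1)`, and satisfy `|y(t)| = exp (-(1/c)(1 + cos t)) ≤ 1`. -/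
theorem inamovible_path_model_saddle_node (c : ℝ) (hc0 : 0 < c) (hc1 : c < 1) :
    let x : ℝ → ℂ := fun t => (c : ℂ) * Complex.exp (Complex.I * (t : ℂ))
    let y : ℝ → ℂ := fun t =>
      Complex.exp (-(1 / (c : ℂ)) * (1 + Complex.exp (-Complex.I * (t : ℂ))))
    (∀ t ∈ Set.Icc (-Real.pi) Real.pi,
      (x t) ^ 2 * deriv y t = y t * deriv x t) ∧
    (x (-Real.pi) = -(c : ℂ) ∧ y (-Real.pi) = 1 ∧
      x Real.pi = -(c : ℂ) ∧ y Real.pi = 1) ∧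
    (∀ t ∈ Set.Icc (-Real.pi) Real.pi,
      ‖y t‖ = Real.exp (-(1 / c) * (1 + Real.cos t)) ∧
      ‖y t‖ ≤ 1) :=
  inamovible_path_model_saddle_node_general c hc0
end

section
/- Let k ≥ 1 and for j ∈ ℤ define the strip Ṽ_j^β = { z ∈ ℂ : Re z < log ρ, |Im z − (2j+1)π/k| < π/k + β }, where 0 < β' < β < π/(2k). Then for every z* ∈ Ṽ_j^{β'}, there exists δ > 0 (depending only on k, β, β') such that every trajectory z_θ of ż = −θ·exp(k z) starting at z* with |arg θ| < δ remains in Ṽ_j^β for as long as Re z_θ(t) < log ρ. -/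
/-!
The imaginary part of `ż = -θ e^{kz}` is `-‖θ‖ e^{k Re z} sin (k Im z + arg θ)`. On the two edges
`k Im z ≡ ±kβ' (mod 2π)` of the closed strip `|Im z - (2j+1)π/k| ≤ π/k + β'` this has the sign
that pushes `Im z` back inside, as soon as `|arg θ| < kβ' < π/2`. By the fencing theorem for
differential inequalities the trajectory never leaves that closed strip, which lies in `Ṽ_j^β`;
so `δ = kβ'` works.
-/

open Complex Set

theorem mem_Icc_of_hasDerivAt_of_boundary {f f' : ℝ → ℝ} {a b lo hi : ℝ}
    (hf : ∀ x ∈ Icc a b, HasDerivAt f (f' x) x) (ha : f a ∈ Icc lo hi)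
    (hlo : ∀ x ∈ Ico a b, f x = lo → 0 < f' x) (hhi : ∀ x ∈ Ico a b, f x = hi → f' x < 0) :
    ∀ x ∈ Icc a b, f x ∈ Icc lo hi := by
  have hcont : ContinuousOn f (Icc a b) := fun x hx => (hf x hx).continuousAt.continuousWithinAt
  have hderiv : ∀ x ∈ Ico a b, HasDerivWithinAt f (f' x) (Ici x) x :=
    fun x hx => (hf x (Ico_subset_Icc_self hx)).hasDerivWithinAt
  intro x hx
  constructor
  · have := image_le_of_deriv_right_lt_deriv_boundary (B := fun _ => -lo) hcont.neg
      (fun y hy => (hderiv y hy).neg) (neg_le_neg ha.1) (fun _ => hasDerivAt_const _ _)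
      (fun y hy hy' => neg_lt_zero.2 (hlo y hy (neg_inj.1 hy'))) hx
    simpa using this
  · exact image_le_of_deriv_right_lt_deriv_boundary hcont hderiv ha.2
      (B := fun _ => hi) (fun _ => hasDerivAt_const _ _) hhi hx

theorem im_neg_mul_exp_ofReal_mul (θ w : ℂ) (a : ℝ) :
    (-θ * exp (a * w)).im = -(‖θ‖ * Real.exp (a * w.re) * Real.sin (a * w.im + θ.arg)) := by
  have hre : θ.re = ‖θ‖ * Real.cos θ.arg := (norm_mul_cos_arg θ).symm
  have him : θ.im = ‖θ‖ * Real.sin θ.arg := (norm_mul_sin_arg θ).symm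
  rw [Real.sin_add]
  simp only [neg_mul, neg_im, mul_im θ, exp_re, exp_im, re_ofReal_mul, im_ofReal_mul, hre, him]
  ring

theorem im_neg_mul_exp_ofReal_mul_neg {θ w : ℂ} {a γ : ℝ} (n : ℤ) (hθ : θ ≠ 0)
    (harg : |θ.arg| < γ) (hγ : 2 * γ < Real.pi) (hw : a * w.im = γ + n * (2 * Real.pi)) :
    (-θ * exp (a * w)).im < 0 := by
  have hsin : 0 < Real.sin (a * w.im + θ.arg) := by
    rw [hw, add_right_comm, Real.sin_add_int_mul_two_pi]
    obtain ⟨h₁, h₂⟩ := abs_lt.1 harg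
    exact Real.sin_pos_of_pos_of_lt_pi (by linarith) (by linarith)
  rw [im_neg_mul_exp_ofReal_mul, neg_neg_iff_pos]
  exact mul_pos (mul_pos (norm_pos_iff.2 hθ) (Real.exp_pos _)) hsin

theorem im_neg_mul_exp_ofReal_mul_pos {θ w : ℂ} {a γ : ℝ} (n : ℤ) (hθ : θ ≠ 0)
    (harg : |θ.arg| < γ) (hγ : 2 * γ < Real.pi) (hw : a * w.im = -γ + n * (2 * Real.pi)) :
    0 < (-θ * exp (a * w)).im := by
  have hsin : Real.sin (a * w.im + θ.arg) < 0 := by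
    rw [hw, add_right_comm, Real.sin_add_int_mul_two_pi]
    obtain ⟨h₁, h₂⟩ := abs_lt.1 harg
    exact Real.sin_neg_of_neg_of_neg_pi_lt (by linarith) (by linarith)
  rw [im_neg_mul_exp_ofReal_mul, neg_pos]
  exact mul_neg_of_pos_of_neg (mul_pos (norm_pos_iff.2 hθ) (Real.exp_pos _)) hsin

theorem stability_beam_stays_in_sector_general
    (k : ℕ) (hk : 1 ≤ k) (ρ : ℝ) (β β' : ℝ)
    (hβ'0 : 0 < β') (hβ'β : β' < β) (hβ : β < Real.pi / (2 * k)) (j : ℤ) :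
    let V : ℝ → Set ℂ := fun b =>
      {z : ℂ | z.re < Real.log ρ ∧
        |z.im - (2 * (j : ℝ) + 1) * Real.pi / k| < Real.pi / k + b}
    ∃ δ > 0, ∀ zstar ∈ V β', ∀ θ : ℂ, θ ≠ 0 → |θ.arg| < δ →
      ∀ z : ℝ → ℂ, z 0 = zstar →
      (∀ t : ℝ, 0 ≤ t → HasDerivAt z (-θ * Complex.exp ((k : ℂ) * z t)) t) →
      ∀ t : ℝ, 0 ≤ t → (∀ s ∈ Set.Icc 0 t, (z s).re < Real.log ρ) →
        z t ∈ V β := by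
  intro V
  have hk0 : (0 : ℝ) < k := by exact_mod_cast hk
  have hγ : 2 * (k * β') < Real.pi := by
    have := (lt_div_iff₀ (by positivity)).1 (hβ'β.trans hβ)
    linarith
  refine ⟨k * β', by positivity, ?_⟩
  rintro zstar ⟨-, hzstar⟩ θ hθ harg z rfl hz t ht hre
  refine ⟨hre t ⟨ht, le_rfl⟩, ?_⟩
  set c := (2 * (j : ℝ) + 1) * Real.pi / k with hc
  have hflow : ∀ s ∈ Icc 0 t, HasDerivAt (fun s => (z s).im)
      (-θ * exp (((k : ℝ) : ℂ) * z s)).im s := fun s hs => by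
    rw [ofReal_natCast]
    exact imCLM.hasFDerivAt.comp_hasDerivAt s (hz s hs.1)
  have hfence := mem_Icc_of_hasDerivAt_of_boundary (lo := c - (Real.pi / k + β'))
    (hi := c + (Real.pi / k + β')) hflow
    (by constructor <;> linarith [abs_lt.1 hzstar])
    (fun s _ hs => im_neg_mul_exp_ofReal_mul_pos j hθ harg hγ
      (by rw [hs, hc]; field_simp; ring))
    (fun s _ hs => im_neg_mul_exp_ofReal_mul_neg (j + 1) hθ harg hγ
      (by rw [hs, hc]; push_cast; field_simp; ring)) t ⟨ht, le_rfl⟩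
  exact abs_lt.2 ⟨by linarith [hfence.1], by linarith [hfence.2]⟩

/-- Sectorial confinement of stability beams: given `0 < β' < β < π/(2k)`
and `ρ > 0`, there is `δ > 0` (depending only on `k, β, β'`) such that every
trajectory of `ż = −θ e^{kz}` with `|arg θ| < δ` starting in the smaller
strip `Ṽ_j^{β'}` stays in the larger strip `Ṽ_j^β` as long as
`Re z < log ρ`. -/
theorem stability_beam_stays_in_sector
    (k : ℕ) (hk : 1 ≤ k) (ρ : ℝ) (hρ : 0 < ρ) (β β' : ℝ)
    (hβ'0 : 0 < β') (hβ'β : β' < β) (hβ : β < Real.pi / (2 * k)) (j : ℤ) :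
    let V : ℝ → Set ℂ := fun b =>
      {z : ℂ | z.re < Real.log ρ ∧
        |z.im - (2 * (j : ℝ) + 1) * Real.pi / k| < Real.pi / k + b}
    ∃ δ > 0, ∀ zstar ∈ V β', ∀ θ : ℂ, θ ≠ 0 → |θ.arg| < δ →
      ∀ z : ℝ → ℂ, z 0 = zstar →
      (∀ t : ℝ, 0 ≤ t → HasDerivAt z (-θ * Complex.exp ((k : ℂ) * z t)) t) →
      ∀ t : ℝ, 0 ≤ t → (∀ s ∈ Set.Icc 0 t, (z s).re < Real.log ρ) →
        z t ∈ V β :=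
  stability_beam_stays_in_sector_general k hk ρ β β' hβ'0 hβ'β hβ j
end
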